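/- For every n ∈ ℕ, E(Xⁿ) = H_n, i.e. the operator e^{−D²/2} maps the monomial Xⁿ to the n-th probabilist's Hermite polynomial. -/

import Mathlib

/-!
The operator `e^{−D²/2}` conjugates multiplication by `X` into `X − D`: since
`D^{2k} (X p) = X D^{2k} p + 2k D^{2k−1} p` and `(−1)^k/(2^k k!) · 2k = −(−1)^{k−1}/(2^{k−1} (k−1)!)`,
the commutator terms reassemble into `−D (E p)`. Hence `E (X^{n+1}) = (X − D) E (X^n)`, which is
the recursion `H_{n+1} = X H_n − H_n'` starting from `E 1 = 1 = H_0`.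
-/

open Polynomial Finset

/-- The operator `e^{−D²/2}` on polynomials: the finite sum
`E p = Σ_{k=0}^{natDegree p} ((−1)^k / (2^k k!)) · p^{(2k)}`. -/
noncomputable def expNegHalfDSq (p : ℝ[X]) : ℝ[X] :=
  ∑ k ∈ range (p.natDegree + 1),
    ((-1 : ℝ) ^ k / (2 ^ k * (k.factorial : ℝ))) • (⇑derivative)^[2 * k] p

open scoped Nat

theorem iterate_derivative_X_mul {R : Type*} [Semiring R] (n : ℕ) (p : R[X]) :
    derivative^[n] (X * p) = X * derivative^[n] p + n • derivative^[n - 1] p := by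
  induction n with
  | zero => simp
  | succ n ih =>
    rw [Function.iterate_succ_apply', ih]
    cases n with
    | zero => simp [derivative_mul, add_comm]
    | succ n =>
      simp only [derivative_add, derivative_mul, derivative_X, one_mul, derivative_smul,
        Function.iterate_succ_apply', Nat.add_sub_cancel]
      rw [succ_nsmul _ (n + 1)]
      abel

noncomputable def expNegHalfDSqCoeff (k : ℕ) : ℝ := (-1) ^ k / (2 ^ k * k !)

theorem expNegHalfDSqCoeff_succ_mul (k : ℕ) :
    expNegHalfDSqCoeff (k + 1) * (2 * (k + 1) : ℕ) = -expNegHalfDSqCoeff k := by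
  simp only [expNegHalfDSqCoeff, Nat.factorial_succ]
  push_cast
  field_simp
  ring

theorem expNegHalfDSq_eq_sum_range {p : ℝ[X]} {N : ℕ} (h : p.natDegree < N) :
    expNegHalfDSq p = ∑ k ∈ range N, expNegHalfDSqCoeff k • derivative^[2 * k] p := by
  refine sum_subset (range_subset_range.2 h) fun k _ hk ↦ ?_
  rw [iterate_derivative_eq_zero (by simp at hk; omega), smul_zero]

theorem expNegHalfDSq_X_mul (p : ℝ[X]) :
    expNegHalfDSq (X * p) = X * expNegHalfDSq p - derivative (expNegHalfDSq p) := by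
  set M := p.natDegree + 1
  have hXp : (X * p).natDegree < M + 1 := natDegree_mul_le.trans_lt (by simp; omega)
  have hshift : ∑ k ∈ range (M + 1),
      (expNegHalfDSqCoeff k * (2 * k : ℕ)) • derivative^[2 * k - 1] p =
        -∑ k ∈ range M, expNegHalfDSqCoeff k • derivative^[2 * k + 1] p := by
    rw [sum_range_succ', ← sum_neg_distrib]
    simp only [expNegHalfDSqCoeff_succ_mul, neg_smul, mul_zero, Nat.cast_zero, zero_smul,
      add_zero, show ∀ k, 2 * (k + 1) - 1 = 2 * k + 1 from fun k ↦ by omega]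
  calc expNegHalfDSq (X * p)
      = ∑ k ∈ range (M + 1), expNegHalfDSqCoeff k • derivative^[2 * k] (X * p) :=
        expNegHalfDSq_eq_sum_range hXp
    _ = X * ∑ k ∈ range (M + 1), expNegHalfDSqCoeff k • derivative^[2 * k] p
          - ∑ k ∈ range M, expNegHalfDSqCoeff k • derivative^[2 * k + 1] p := by
        simp only [iterate_derivative_X_mul, ← Nat.cast_smul_eq_nsmul ℝ, smul_add, ← mul_smul,
          sum_add_distrib, mul_sum, mul_smul_comm]
        rw [hshift, sub_eq_add_neg]
    _ = X * expNegHalfDSq p - derivative (expNegHalfDSq p) := by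
        rw [← expNegHalfDSq_eq_sum_range (N := M + 1) (by omega),
          expNegHalfDSq_eq_sum_range (N := M) (by omega), derivative_sum]
        simp only [derivative_smul, Function.iterate_succ_apply']

/-- `e^{−D²/2}` maps `Xⁿ` to the n-th probabilist's Hermite polynomial. -/
theorem expNegHalfDSq_monomial (n : ℕ) :
    expNegHalfDSq (X ^ n) = (Polynomial.hermite n).map (Int.castRingHom ℝ) := by
  induction n with
  | zero => simp [expNegHalfDSq]
  | succ n ih =>
    rw [pow_succ', expNegHalfDSq_X_mul, ih, hermite_succ, Polynomial.map_sub, Polynomial.map_mul,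
      Polynomial.map_X, derivative_map]
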